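/- Let G be a bipartite graph and C a cycle of even length 2m ≥ 6 in G. Let u ∈ V(G)\V(C) be adjacent to all m vertices of C in one part, and let w ∈ V(G)\V(C) be adjacent to at least m − 1 of the m vertices of C in the other part. Then there exist an edge v v⁺ of C such that the graph induced on (V(C) ∪ {u, w}) \ {v, v⁺} contains a cycle of length 2m (replacing v, v⁺ on C by u and w). -/

import Mathlib

/-!
Along the cycle the two sides alternate, so `C` has exactly `m` vertices in `X`, and `w` misses
at most one of them, say `b` (any vertex of `C ∩ X` if `w` misses none). Rotate `C` so that
`C = b x₁ x₂ x₃ x₄ ⋯ z b`. Then `x₂, x₄ ∈ X \ {b}` are adjacent to `w` and `x₃, z ∈ Y` are adjacent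
to `u`, so `w x₂ x₃ u z ⋯ x₄ w` is a cycle of length `2m` avoiding the edge `b x₁`; `m ≥ 3`
makes `x₄` come strictly before `z`.
-/

open Finset SimpleGraph

lemma Finset.exists_forall_ne_of_card_le_card_filter_add_one {α : Type*} {s : Finset α}
    {p : α → Prop} [DecidablePred p] (hs : s.Nonempty) (h : #s ≤ #(s.filter p) + 1) :
    ∃ b ∈ s, ∀ z ∈ s, z ≠ b → p z := by
  by_cases hall : ∀ z ∈ s, p z
  · obtain ⟨b, hb⟩ := hs
    exact ⟨b, hb, fun z hz _ => hall z hz⟩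
  push Not at hall
  obtain ⟨b, hb, hpb⟩ := hall
  refine ⟨b, hb, fun z hz hzb => by_contra fun hpz => hzb ?_⟩
  have hneg : #{x ∈ s | ¬p x} ≤ 1 := by
    have := card_filter_add_card_filter_not (s := s) p
    omega
  exact card_le_one.mp hneg z (mem_filter.mpr ⟨hz, hpz⟩) b (mem_filter.mpr ⟨hb, hpb⟩)

namespace SimpleGraph

variable {V : Type*} {G : SimpleGraph V}

namespace Walk

lemma exists_eq_cons_cons_cons_cons_concat {a b : V} (p : G.Walk a b) (hp : 5 ≤ p.length) :
    ∃ (x₁ x₂ x₃ x₄ z : V) (h₀₁ : G.Adj a x₁) (h₁₂ : G.Adj x₁ x₂) (h₂₃ : G.Adj x₂ x₃)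
      (h₃₄ : G.Adj x₃ x₄) (q : G.Walk x₄ z) (hz : G.Adj z b),
      p = cons h₀₁ (cons h₁₂ (cons h₂₃ (cons h₃₄ (q.concat hz)))) := by
  match p, hp with
  | cons h₀₁ (cons h₁₂ (cons h₂₃ (cons h₃₄ (cons h₄₅ r)))), _ =>
    obtain ⟨z, q, hz, hq⟩ := exists_cons_eq_concat h₄₅ r
    exact ⟨_, _, _, _, z, h₀₁, h₁₂, h₂₃, h₃₄, q, hz, by rw [hq]⟩

theorem IsCycle.exists_isCycle_splice {b u w : V} {c : G.Walk b b} (hc : c.IsCycle)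
    (hlen : 5 ≤ c.length) (hu : u ∉ c.support) (hw : w ∉ c.support) (huw : u ≠ w)
    (hw₂ : G.Adj w (c.getVert 2)) (hu₃ : G.Adj u (c.getVert 3)) (hw₄ : G.Adj w (c.getVert 4))
    (hu' : G.Adj u c.penultimate) :
    ∃ d : G.Walk w w, d.IsCycle ∧ d.length = c.length ∧
      ∀ x ∈ d.support, (x ∈ c.support ∨ x = u ∨ x = w) ∧ x ≠ b ∧ x ≠ c.snd := by
  obtain ⟨x₁, x₂, x₃, x₄, z, h₀₁, h₁₂, h₂₃, h₃₄, q, hz, rfl⟩ :=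
    c.exists_eq_cons_cons_cons_cons_concat hlen
  rw [penultimate_cons_cons, penultimate_cons_cons, penultimate_cons_cons,
    penultimate_cons_of_not_nil _ _ (by simp [concat_eq_append]), penultimate_concat] at hu'
  simp only [getVert_cons_succ, getVert_zero] at hw₂ hu₃ hw₄
  have hnd := hc.support_nodup
  simp only [support_cons, support_concat, List.tail_cons, List.nodup_cons, List.mem_cons,
    List.mem_append, List.not_mem_nil, or_false, not_or] at hnd hu hw
  refine ⟨cons hw₂ (cons h₂₃ (cons hu₃.symm (cons hu' (q.reverse.concat hw₄.symm)))),
    ?_, by simp, ?_⟩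
  · simp only [isCycle_iff_isPath_tail_and_le_length, getVert_cons_succ, tail_cons, isPath_def,
      support_copy, support_cons, support_concat, support_reverse, List.nodup_cons, List.mem_cons,
      List.mem_append, List.mem_reverse, List.not_mem_nil, length_cons]
    grind
  · simp only [support_cons, support_concat, support_reverse, List.mem_cons, List.mem_append,
      List.mem_reverse, List.not_mem_nil, getVert_cons_succ, getVert_zero]
    grind

end Walk

section Bipartite

variable {s t : Set V}

lemma IsBipartiteWith.two_mul_countP_support [DecidablePred (· ∈ s)]
    (h : G.IsBipartiteWith s t) {a b : V} (p : G.Walk a b) :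
    2 * p.support.countP (· ∈ s) = p.length + [a, b].countP (· ∈ s) := by
  induction p with
  | @nil a => by_cases ha : a ∈ s <;> simp [ha]
  | @cons a a' b hadj p ih =>
    have hxor : a ∈ s ↔ a' ∉ s := by
      rcases h.mem_of_adj hadj with ⟨ha, ha'⟩ | ⟨ha, ha'⟩
      · simp [ha, Set.disjoint_right.mp h.disjoint ha']
      · simp [ha', Set.disjoint_right.mp h.disjoint ha]
    simp only [Walk.support_cons, Walk.length_cons, List.countP_cons] at ih ⊢
    by_cases ha : a ∈ s <;> simp_all <;> omega

lemma IsBipartiteWith.two_mul_card_filter_support_of_isCycle [DecidableEq V]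
    [DecidablePred (· ∈ s)] (h : G.IsBipartiteWith s t) {v : V} {c : G.Walk v v}
    (hc : c.IsCycle) : 2 * #{x ∈ c.support.toFinset | x ∈ s} = c.length := by
  have hcount := h.two_mul_countP_support c
  have htail : c.support.toFinset = c.support.tail.toFinset := by
    rw [← c.cons_tail_support, List.toFinset_cons, List.tail_cons,
      Finset.insert_eq_of_mem (List.mem_toFinset.mpr (c.end_mem_tail_support hc.not_nil))]
  rw [← c.cons_tail_support, List.countP_cons] at hcount
  rw [htail, hc.support_nodup.card_eq_countP]
  by_cases hv : v ∈ s <;> simp_all; omega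

theorem IsBipartiteWith.exists_isCycle_splice (h : G.IsBipartiteWith s t) {b u w : V}
    {c : G.Walk b b} (hc : c.IsCycle) (hlen : 5 ≤ c.length) (hb : b ∈ s)
    (hu : u ∉ c.support) (hw : w ∉ c.support) (huw : u ≠ w)
    (hadju : ∀ z ∈ c.support, z ∈ t → G.Adj u z)
    (hadjw : ∀ z ∈ c.support, z ∈ s → z ≠ b → G.Adj w z) :
    ∃ d : G.Walk w w, d.IsCycle ∧ d.length = c.length ∧
      ∀ x ∈ d.support, (x ∈ c.support ∨ x = u ∨ x = w) ∧ x ≠ b ∧ x ≠ c.snd := by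
  have hst : ∀ i < c.length, c.getVert i ∈ s → c.getVert (i + 1) ∈ t :=
    fun i hi hs => h.mem_of_mem_adj hs (c.adj_getVert_succ hi)
  have hts : ∀ i < c.length, c.getVert i ∈ t → c.getVert (i + 1) ∈ s :=
    fun i hi ht => h.symm.mem_of_mem_adj ht (c.adj_getVert_succ hi)
  have h₁ := hst 0 (by omega) (by simpa using hb)
  have h₂ := hts 1 (by omega) h₁
  have h₃ := hst 2 (by omega) h₂
  have h₄ := hts 3 (by omega) h₃
  have hne : ∀ i, 0 < i → i < c.length → c.getVert i ≠ b :=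
    fun i h0 hi => (hc.getVert_endpoint_iff hi.le).not.mpr (by omega)
  refine hc.exists_isCycle_splice hlen hu hw huw ?_ (hadju _ (c.getVert_mem_support 3) h₃) ?_
    (hadju _ (c.getVert_mem_support _) (h.symm.mem_of_mem_adj' hb (c.adj_penultimate hc.not_nil)))
  · exact hadjw _ (c.getVert_mem_support 2) h₂ (hne 2 (by omega) (by omega))
  · exact hadjw _ (c.getVert_mem_support 4) h₄ (hne 4 (by omega) (by omega))

end Bipartite

end SimpleGraph

theorem splice_two_vertices_into_cycle_general {V : Type*} [DecidableEq V]
    (G : SimpleGraph V) [DecidableRel G.Adj]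
    (X Y : Finset V) (hdisj : Disjoint X Y)
    (hbip : ∀ a b, G.Adj a b → (a ∈ X ∧ b ∈ Y) ∨ (a ∈ Y ∧ b ∈ X))
    (m : ℕ) (hm : 3 ≤ m)
    (v₀ : V) (c : G.Walk v₀ v₀) (hc : c.IsCycle) (hlen : c.length = 2 * m)
    (u w : V) (hu : u ∉ c.support) (hw : w ∉ c.support) (huw : u ≠ w)
    (hadju : ∀ z ∈ c.support, z ∈ Y → G.Adj u z)
    (hadjw : m - 1 ≤ ((c.support.toFinset ∩ X).filter (fun z => G.Adj w z)).card) :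
    ∃ v₁ v₂, s(v₁, v₂) ∈ c.edges ∧
      ∃ (w₀ : V) (d : G.Walk w₀ w₀), d.IsCycle ∧ d.length = 2 * m ∧
        ∀ x ∈ d.support, (x ∈ c.support ∨ x = u ∨ x = w) ∧ x ≠ v₁ ∧ x ≠ v₂ := by
  have hB : G.IsBipartiteWith X Y := ⟨disjoint_coe.mpr hdisj, hbip⟩
  have hcardX : #(c.support.toFinset ∩ X) = m := by
    have := hB.two_mul_card_filter_support_of_isCycle hc
    simp only [mem_coe, filter_mem_eq_inter] at this
    omega
  obtain ⟨b, hbA, hwb⟩ := (c.support.toFinset ∩ X).exists_forall_ne_of_card_le_card_filter_add_one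
    (p := fun z => G.Adj w z) (card_pos.mp (by omega)) (by omega)
  obtain ⟨hb, hbX⟩ : b ∈ c.support ∧ b ∈ X := by simpa using hbA
  obtain ⟨d, hd, hdlen, hdsupp⟩ := hB.exists_isCycle_splice (hc.rotate hb) (by simp; omega) hbX
    (by simpa using hu) (by simpa using hw) huw (fun z hz => hadju z (by simpa using hz))
    (fun z hz hzX => hwb z (by simp_all))
  exact ⟨b, (c.rotate b hb).snd,
    (c.rotate_edges b hb).mem_iff.mp (Walk.mk_start_snd_mem_edges (hc.rotate hb).not_nil),
    w, d, hd, by simp [hdlen, hlen], fun x hx => by simpa using hdsupp x hx⟩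

/-- Let G be bipartite and C a cycle of even length 2m ≥ 6. Let
u ∉ V(C) be adjacent to all m vertices of C in one part (say Y) and w ∉ V(C) be
adjacent to at least m − 1 of the m vertices of C in the other part (X). Then there
is an edge v₁v₂ of C such that the graph induced on (V(C) ∪ {u, w}) \ {v₁, v₂}
contains a cycle of length 2m. -/
theorem splice_two_vertices_into_cycle {V : Type*} [DecidableEq V]
    (G : SimpleGraph V) [DecidableRel G.Adj]
    (X Y : Finset V) (hdisj : Disjoint X Y) (hcover : ∀ z : V, z ∈ X ∨ z ∈ Y)
    (hbip : ∀ a b, G.Adj a b → (a ∈ X ∧ b ∈ Y) ∨ (a ∈ Y ∧ b ∈ X))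
    (m : ℕ) (hm : 3 ≤ m)
    (v₀ : V) (c : G.Walk v₀ v₀) (hc : c.IsCycle) (hlen : c.length = 2 * m)
    (u w : V) (hu : u ∉ c.support) (hw : w ∉ c.support) (huw : u ≠ w)
    (huX : u ∈ X) (hwY : w ∈ Y)
    (hadju : ∀ z ∈ c.support, z ∈ Y → G.Adj u z)
    (hadjw : m - 1 ≤ ((c.support.toFinset ∩ X).filter (fun z => G.Adj w z)).card) :
    ∃ v₁ v₂, s(v₁, v₂) ∈ c.edges ∧
      ∃ (w₀ : V) (d : G.Walk w₀ w₀), d.IsCycle ∧ d.length = 2 * m ∧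
        ∀ x ∈ d.support, (x ∈ c.support ∨ x = u ∨ x = w) ∧ x ≠ v₁ ∧ x ≠ v₂ :=
  splice_two_vertices_into_cycle_general G X Y hdisj hbip m hm v₀ c hc hlen u w hu hw huw hadju
    hadjw
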